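/- Let m ≥ 4 be an integer, and let M₁ = [[2m,1,0],[m²,0,1],[1,0,0]] and M₂ = [[2m+2,1,0],[(m+1)²,0,1],[1,0,0]]. Let 𝔠 be the cone consisting of the zero vector together with all (x₁,x₂,x₃) ∈ ℝ³ with x₃ > 0, 2.3m ≤ x₁/x₃ ≤ 2.5m+3 and m² ≤ x₂/x₃ ≤ m²+2m+2. Then M₁𝔠 ⊆ 𝔠 and M₂𝔠 ⊆ 𝔠; consequently the semigroup generated by M₁ and M₂ preserves 𝔠. -/

import Mathlib

open Matrix

noncomputable section

/-- `M₁ = [[2m,1,0],[m²,0,1],[1,0,0]]`, the substitution matrix of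
`ζ_m : 0 ↦ 0^{2m} 1^{m²} 2, 1 ↦ 0, 2 ↦ 1`. -/
def M1 (m : ℤ) : Matrix (Fin 3) (Fin 3) ℝ :=
  !![2 * (m : ℝ), 1, 0; (m : ℝ) ^ 2, 0, 1; 1, 0, 0]

/-- `M₂ = [[2m+2,1,0],[(m+1)²,0,1],[1,0,0]]`, the substitution matrix of `ζ_{m+1}`. -/
def M2 (m : ℤ) : Matrix (Fin 3) (Fin 3) ℝ :=
  !![2 * (m : ℝ) + 2, 1, 0; ((m : ℝ) + 1) ^ 2, 0, 1; 1, 0, 0]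

/-- The cone `𝔠`: the zero vector together with all `(x₁,x₂,x₃)` with `x₃ > 0`,
`2.3 m ≤ x₁/x₃ ≤ 2.5 m + 3` and `m² ≤ x₂/x₃ ≤ m² + 2m + 2`. -/
def cone (m : ℤ) : Set (Fin 3 → ℝ) :=
  {x | x = 0 ∨ (0 < x 2 ∧
    2.3 * (m : ℝ) ≤ x 0 / x 2 ∧ x 0 / x 2 ≤ 2.5 * (m : ℝ) + 3 ∧
    (m : ℝ) ^ 2 ≤ x 1 / x 2 ∧ x 1 / x 2 ≤ (m : ℝ) ^ 2 + 2 * (m : ℝ) + 2)}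

/-! Both generators have the form `Z_k = [[2k,1,0],[k²,0,1],[1,0,0]]` (with `k = m` and
`k = m + 1`), and `Z_k` maps `𝔠` into itself for every real `k ∈ [m, m+1]`. Writing `r = x₁/x₃ ∈ [2.3m, 2.5m+3]` and `s = x₂/x₃ ∈ [m², m²+2m+2]`, the image
has ratios `2k + s/r` and `k² + 1/r`; the first stays in `[2.3m, 2.5m+3]` because
`m²/(2.5m+3) ≥ 0.3m` and `(m²+2m+2)/(2.3m) ≤ 0.5m+1` once `m ≥ 4`, the second in
`[m², m²+2m+2]` because `1/r ≤ 1`. The semigroup statement follows since the matrices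
preserving a set form a subsemigroup. -/

namespace Matrix

variable {n R : Type*} [Fintype n] [NonUnitalSemiring R]

def mapsToSubsemigroup (C : Set (n → R)) : Subsemigroup (Matrix n n R) where
  carrier := {P | Set.MapsTo P.mulVec C C}
  mul_mem' {P Q} hP hQ x hx := by
    rw [← mulVec_mulVec]; exact hP (hQ hx)

end Matrix

def zetaMatrix (k : ℝ) : Matrix (Fin 3) (Fin 3) ℝ :=
  !![2 * k, 1, 0; k ^ 2, 0, 1; 1, 0, 0]

lemma M1_eq_zetaMatrix (m : ℤ) : M1 m = zetaMatrix m := rfl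

lemma M2_eq_zetaMatrix (m : ℤ) : M2 m = zetaMatrix (m + 1) := by
  simp only [M2, zetaMatrix, mul_add, mul_one]

lemma zetaMatrix_mulVec (k : ℝ) (x : Fin 3 → ℝ) :
    zetaMatrix k *ᵥ x = ![2 * k * x 0 + x 1, k ^ 2 * x 0 + x 2, x 0] := by
  ext i
  fin_cases i <;> simp [zetaMatrix, mulVec, dotProduct, Fin.sum_univ_three]

lemma mem_cone_iff {m : ℤ} {x : Fin 3 → ℝ} :
    x ∈ cone m ↔ x = 0 ∨ (0 < x 2 ∧
      2.3 * (m : ℝ) * x 2 ≤ x 0 ∧ x 0 ≤ (2.5 * (m : ℝ) + 3) * x 2 ∧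
      (m : ℝ) ^ 2 * x 2 ≤ x 1 ∧ x 1 ≤ ((m : ℝ) ^ 2 + 2 * (m : ℝ) + 2) * x 2) := by
  refine or_congr Iff.rfl ⟨fun ⟨h2, h⟩ => ⟨h2, ?_⟩, fun ⟨h2, h⟩ => ⟨h2, ?_⟩⟩ <;>
    simpa only [le_div_iff₀ h2, div_le_iff₀ h2] using h

lemma zetaMatrix_mulVec_mem_cone {m : ℤ} {k : ℝ} (hm : 4 ≤ m) (hmk : m ≤ k) (hkm : k ≤ m + 1)
    {x : Fin 3 → ℝ} (hx : x ∈ cone m) : zetaMatrix k *ᵥ x ∈ cone m := by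
  obtain rfl | ⟨h2, hr₁, hr₂, hs₁, hs₂⟩ := mem_cone_iff.1 hx
  · exact Or.inl (mulVec_zero _)
  have hm' : (4 : ℝ) ≤ m := by exact_mod_cast hm
  have h0 : 0 < x 0 := by nlinarith
  have hk_sq : (m : ℝ) ^ 2 ≤ k ^ 2 ∧ k ^ 2 ≤ ((m : ℝ) + 1) ^ 2 :=
    ⟨pow_le_pow_left₀ (by linarith) hmk 2, pow_le_pow_left₀ (by linarith) hkm 2⟩
  rw [mem_cone_iff, zetaMatrix_mulVec]
  refine Or.inr ⟨h0, ?_, ?_, ?_, ?_⟩ <;> simp only [Matrix.cons_val]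
  · -- `0.3m · x₁ ≤ 0.3m (2.5m+3) x₃ ≤ m² x₃ ≤ x₂`
    nlinarith [mul_le_mul_of_nonneg_left hr₂ (by linarith : (0 : ℝ) ≤ 0.3 * m),
      mul_nonneg (by nlinarith : (0 : ℝ) ≤ 0.25 * (m : ℝ) ^ 2 - 0.9 * m) h2.le]
  · -- `x₂ ≤ (m²+2m+2) x₃ ≤ (0.5m+1) 2.3m x₃ ≤ (0.5m+1) x₁`
    nlinarith [mul_le_mul_of_nonneg_left hr₁ (by linarith : (0 : ℝ) ≤ 0.5 * m + 1),
      mul_nonneg (by nlinarith : (0 : ℝ) ≤ 0.15 * (m : ℝ) ^ 2 + 0.3 * m - 2) h2.le]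
  · nlinarith
  · nlinarith

/-- For `m ≥ 4`, the matrices `M₁, M₂` map the cone `𝔠` into itself; consequently every
element of the semigroup they generate preserves `𝔠`. -/
theorem stmt10 (m : ℤ) (hm : 4 ≤ m) :
    (∀ x ∈ cone m, (M1 m).mulVec x ∈ cone m) ∧
    (∀ x ∈ cone m, (M2 m).mulVec x ∈ cone m) ∧
    (∀ P ∈ Subsemigroup.closure {M1 m, M2 m}, ∀ x ∈ cone m, P.mulVec x ∈ cone m) := by
  have hM1 : M1 m ∈ mapsToSubsemigroup (cone m) := fun x hx => by
    rw [M1_eq_zetaMatrix]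
    exact zetaMatrix_mulVec_mem_cone hm le_rfl (by linarith) hx
  have hM2 : M2 m ∈ mapsToSubsemigroup (cone m) := fun x hx => by
    rw [M2_eq_zetaMatrix]
    exact zetaMatrix_mulVec_mem_cone hm (by linarith) le_rfl hx
  have hclosure : Subsemigroup.closure {M1 m, M2 m} ≤ mapsToSubsemigroup (cone m) :=
    Subsemigroup.closure_le.2 (Set.insert_subset_iff.2 ⟨hM1, Set.singleton_subset_iff.2 hM2⟩)
  exact ⟨hM1, hM2, fun P hP => hclosure hP⟩
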